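/- Suppose the underlying network G is a tree. Then for any node v ∈ V and any feasible elapsed time t ∈ 𝒯_v, the latest infection path for (v,t) is a most likely infection path for (v,t), i.e., it maximizes P_v over all infection paths consistent with V_e at elapsed time t. -/

import Mathlib

/-!
In a tree a non-source node `u` is susceptible exactly in the slots where its parent is infected
and it is not, so it has `F(parent u) - F(u)` susceptible slots, `F(w)` counting the infected
slots of `w`. Summing by parts over the ball of radius `t + 1` around the source writes the
total number of susceptible slots as `∑ (c(w) - 1) F(w)`, and every non-source `w` within
distance `t` has `c(w) ≥ 1` children because its degree is at least two. Each node `u` of `H`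
must be infected at least `d̄(u, T_u(v;H))` slots before `t`; the latest path achieves exactly
this and infects nothing outside `H`, so it minimises every `F(w)` and hence the total.

A path has probability `(1 - p) ^ (slots staying susceptible)` times `p q_u` or `p (1 - q_u)` per
infected node. Susceptible slots are staying slots plus infected non-source nodes, so another
path saves at most one staying slot per extra infected node; that node is non-explicit and
costs `p (1 - q_u) ≤ 1 - p`, which is exactly `q_u ≥ 2 - 1/p`.
-/

open scoped Classical

namespace SILimited

/-- The possible states of a node in the discrete-time SI model with limited observations:
susceptible, non-susceptible, infected (non-explicit), and explicit. -/
inductive NodeState : Type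
  | susceptible : NodeState
  | nonsusceptible : NodeState
  | infected : NodeState
  | explicitN : NodeState
  deriving DecidableEq

/-- A node state counts as infected if it is infected (non-explicit) or explicit. -/
def NodeState.IsInfected : NodeState → Prop
  | .infected => True
  | .explicitN => True
  | _ => False

variable {V : Type*}

/-- One-time-slot transition probability of a single node `u` with explicit probability `qu`,
infection probability `p`: a susceptible node stays susceptible w.p. `1 - p`, becomes infected
non-explicit w.p. `p * (1 - qu)`, becomes explicit w.p. `p * qu`; infected (resp. explicit)
nodes stay infected (resp. explicit), and non-susceptible nodes remain uninfected w.p. one. -/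
def transProb (p qu : ℝ) : NodeState → NodeState → ℝ
  | .susceptible, .susceptible => 1 - p
  | .susceptible, .infected => p * (1 - qu)
  | .susceptible, .explicitN => p * qu
  | .nonsusceptible, .nonsusceptible => 1
  | .nonsusceptible, .susceptible => 1
  | .infected, .infected => 1
  | .explicitN, .explicitN => 1
  | _, _ => 0

/-- Probability `P_v(X^t)` of an infection path `X` over elapsed time `t` given source `v`:
the product over nodes and time slots of the one-slot transition probabilities, together with
the factor for whether the source is explicit or not. -/
noncomputable def pathProb (p : ℝ) (q : V → ℝ) (v : V) (t : ℕ) (X : V → ℕ → NodeState) : ℝ :=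
  (if X v 0 = .explicitN then q v else 1 - q v) *
    ∏ᶠ u : V, ∏ τ ∈ Finset.range t, transProb p (q u) (X u τ) (X u (τ + 1))

/-- `X` is a valid infection path over times `0, 1, …, t` for the SI dynamics on `G`
with (single) infection source `v`. -/
structure IsInfectionPath (G : SimpleGraph V) (v : V) (t : ℕ) (X : V → ℕ → NodeState) : Prop where
  source_infected : (X v 0).IsInfected
  init_uninfected : ∀ u, u ≠ v → ¬ (X u 0).IsInfected
  susceptible_iff : ∀ u, ∀ τ ≤ t, ¬ (X u τ).IsInfected →
    (X u τ = .susceptible ↔ ∃ w, G.Adj u w ∧ (X w τ).IsInfected)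
  infected_stays : ∀ u, ∀ τ, τ < t → X u τ = .infected → X u (τ + 1) = .infected
  explicit_stays : ∀ u, ∀ τ, τ < t → X u τ = .explicitN → X u (τ + 1) = .explicitN
  infect_from_susceptible : ∀ u, ∀ τ, τ < t → (X u (τ + 1)).IsInfected →
    (X u τ).IsInfected ∨ X u τ = .susceptible

/-- An infection path `X^t` is consistent with the observed explicit set `Ve` if the nodes
explicit at time `t` are exactly those of `Ve`. -/
def ConsistentWith (Ve : Set V) (t : ℕ) (X : V → ℕ → NodeState) : Prop :=
  ∀ u, X u t = .explicitN ↔ u ∈ Ve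

/-- The set `𝒳_v` of infection paths with source `v` and elapsed time `t` consistent with `Ve`. -/
def pathsFor (G : SimpleGraph V) (Ve : Set V) (v : V) (t : ℕ) : Set (V → ℕ → NodeState) :=
  {X | IsInfectionPath G v t X ∧ ConsistentWith Ve t X}

/-- The set `𝒯_v` of feasible elapsed times for source `v`. -/
def feasibleTimes (G : SimpleGraph V) (Ve : Set V) (v : V) : Set ℕ :=
  {t | (pathsFor G Ve v t).Nonempty}

/-- `X` is a most likely infection path for `(v, t)`: it is a consistent infection path and
maximizes `P_v` over `𝒳_v` at elapsed time `t`. -/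
def IsMostLikely (G : SimpleGraph V) (p : ℝ) (q : V → ℝ) (Ve : Set V) (v : V) (t : ℕ)
    (X : V → ℕ → NodeState) : Prop :=
  X ∈ pathsFor G Ve v t ∧ ∀ Y ∈ pathsFor G Ve v t, pathProb p q v t Y ≤ pathProb p q v t X

/-- `d̄(v, A) = max_{u ∈ A} d(v, u)`. -/
noncomputable def dbar (G : SimpleGraph V) (v : V) (A : Set V) : ℕ :=
  sSup (G.dist v '' A)

/-- Vertex set of the subtree `T_u(v;G)` rooted at `u` with the first edge of the path from
`u` to `v` removed: in a tree these are the vertices `w` whose path from `v` passes through `u`. -/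
def subtreeAway (G : SimpleGraph V) (u v : V) : Set V :=
  {w | G.dist v w = G.dist v u + G.dist u w}

/-- Vertex set of the minimal connected subtree of the tree `G` spanning `S`: the vertices
lying on a path between two vertices of `S`. -/
def spanVerts (G : SimpleGraph V) (S : Set V) : Set V :=
  {w | ∃ a ∈ S, ∃ b ∈ S, G.dist a b = G.dist a w + G.dist w b}

/-- The first infection time of node `u` in the infection path `X`. -/
noncomputable def firstInfection (X : V → ℕ → NodeState) (u : V) : ℕ :=
  sInf {τ | (X u τ).IsInfected}

/-- The latest infection path for `(v, t)`: a consistent infection path in which every node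
outside the minimal connected subtree `H` spanning `Ve ∪ {v}` remains uninfected for all
`τ ≤ t`, and every `u ∈ H \ {v}` first becomes infected at time `t - d̄(u, T_u(v;H))`. -/
def IsLatestPath (G : SimpleGraph V) (Ve : Set V) (v : V) (t : ℕ)
    (X : V → ℕ → NodeState) : Prop :=
  IsInfectionPath G v t X ∧ ConsistentWith Ve t X ∧
  (∀ u, u ∉ spanVerts G (Ve ∪ {v}) → ∀ τ ≤ t, ¬ (X u τ).IsInfected) ∧
  (∀ u ∈ spanVerts G (Ve ∪ {v}), u ≠ v →
    firstInfection X u = t - dbar G u (subtreeAway G u v ∩ spanVerts G (Ve ∪ {v})))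

end SILimited

namespace SimpleGraph

variable {V : Type*} {G : SimpleGraph V} {a b u v w x : V}

lemma Connected.exists_adj_dist_add_one_eq (hc : G.Connected) (h : u ≠ v) :
    ∃ w, G.Adj u w ∧ G.dist v w + 1 = G.dist v u := by
  obtain ⟨p, hp⟩ := hc.exists_walk_length_eq_dist u v
  cases p with
  | nil => exact absurd rfl h
  | @cons _ w _ hadj q =>
    refine ⟨w, hadj, ?_⟩
    have hq : G.dist w v ≤ q.length := dist_le q
    have htri : G.dist u v ≤ G.dist u w + G.dist w v := hc.dist_triangle
    rw [dist_eq_one_iff_adj.2 hadj] at htri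
    rw [Walk.length_cons] at hp
    rw [dist_comm, dist_comm (u := v)]
    omega

/-- The neighbour of `u` one step closer to the root `v` (junk value `u` at the root). -/
noncomputable def parent (G : SimpleGraph V) (v u : V) : V :=
  if h : ∃ w, G.Adj u w ∧ G.dist v w + 1 = G.dist v u then h.choose else u

lemma Connected.adj_parent_and_dist (hc : G.Connected) (h : u ≠ v) :
    G.Adj u (G.parent v u) ∧ G.dist v (G.parent v u) + 1 = G.dist v u := by
  have he := hc.exists_adj_dist_add_one_eq h
  rw [parent, dif_pos he]
  exact he.choose_spec

lemma IsTree.eq_of_adj_of_dist_add_one_eq (hT : G.IsTree) (hw : G.Adj u w) (hx : G.Adj u x)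
    (hdw : G.dist v w + 1 = G.dist v u) (hdx : G.dist v x + 1 = G.dist v u) : w = x := by
  obtain ⟨P, -, hP⟩ := hT.connected.exists_path_of_dist v w
  obtain ⟨Q, -, hQ⟩ := hT.connected.exists_path_of_dist v x
  have hPu : (P.concat hw.symm).IsPath := Walk.isPath_of_length_eq_dist _ (by simp [hP, hdw])
  have hQu : (Q.concat hx.symm).IsPath := Walk.isPath_of_length_eq_dist _ (by simp [hQ, hdx])
  simpa using congrArg Walk.penultimate ((hT.existsUnique_path v u).unique hPu hQu)

lemma IsTree.parent_eq_of_adj (hT : G.IsTree) (hadj : G.Adj u w)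
    (hd : G.dist v w + 1 = G.dist v u) : G.parent v u = w := by
  have h : ∃ w, G.Adj u w ∧ G.dist v w + 1 = G.dist v u := ⟨w, hadj, hd⟩
  rw [parent, dif_pos h]
  exact hT.eq_of_adj_of_dist_add_one_eq h.choose_spec.1 hadj h.choose_spec.2 hd

lemma IsTree.parent_eq_of_dist_eq_add_one (hT : G.IsTree) (hadj : G.Adj u x)
    (hd : G.dist v x = G.dist v u + 1) : G.parent v x = u :=
  hT.parent_eq_of_adj hadj.symm hd.symm

lemma IsTree.eq_parent_or_dist_eq_add_one_of_adj (hT : G.IsTree) (hadj : G.Adj u x) :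
    x = G.parent v u ∨ G.dist v x = G.dist v u + 1 :=
  (hT.dist_eq_dist_add_one_of_adj v hadj).imp
    (fun hd => (hT.parent_eq_of_adj hadj hd.symm).symm) id

lemma Connected.finite_setOf_dist_le (hc : G.Connected) (hloc : ∀ u, (G.neighborSet u).Finite)
    (v : V) (n : ℕ) : {u | G.dist v u ≤ n}.Finite := by
  induction n with
  | zero =>
    refine (Set.finite_singleton v).subset fun u hu => ?_
    exact ((hc.dist_eq_zero_iff).1 (Nat.le_zero.1 hu)).symm
  | succ n ih =>
    refine (ih.union (ih.biUnion fun w _ => hloc w)).subset fun u hu => ?_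
    by_cases hle : G.dist v u ≤ n
    · exact Or.inl hle
    · have hne : u ≠ v := by rintro rfl; simp at hle
      obtain ⟨w, hw, hd⟩ := hc.exists_adj_dist_add_one_eq hne
      have hu : G.dist v u ≤ n + 1 := hu
      exact Or.inr (Set.mem_biUnion (x := w) (show G.dist v w ≤ n by omega) hw.symm)

lemma Walk.dist_eq_add_of_mem_support {R : G.Walk v a} (hl : R.length = G.dist v a)
    (hw : w ∈ R.support) : G.dist v a = G.dist v w + G.dist w a := by
  have hlen := congrArg Walk.length (R.take_spec hw)
  rw [Walk.length_append] at hlen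
  have h1 : G.dist v w ≤ (R.takeUntil w hw).length := dist_le _
  have h2 : G.dist w a ≤ (R.dropUntil w hw).length := dist_le _
  have h3 : G.dist v a ≤ G.dist v w + G.dist w a :=
    (R.takeUntil w hw).reachable.dist_triangle_left a
  omega

/-- The path from `a` to `b` lies in the union of the geodesics from `v` to `a` and to `b`. -/
lemma IsTree.dist_eq_add_or_dist_eq_add (hT : G.IsTree)
    (hab : G.dist a b = G.dist a w + G.dist w b) :
    G.dist v a = G.dist v w + G.dist w a ∨ G.dist v b = G.dist v w + G.dist w b := by
  have hc := hT.connected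
  obtain ⟨Qa, hQa⟩ := hc.exists_walk_length_eq_dist a w
  obtain ⟨Qb, hQb⟩ := hc.exists_walk_length_eq_dist w b
  obtain ⟨Ra, hRa⟩ := hc.exists_walk_length_eq_dist v a
  obtain ⟨Rb, hRb⟩ := hc.exists_walk_length_eq_dist v b
  have hQ : (Qa.append Qb).IsPath :=
    Walk.isPath_of_length_eq_dist _ (by rw [Walk.length_append, hQa, hQb, hab])
  have hQR : Qa.append Qb = (Ra.reverse.append Rb).bypass :=
    (hT.existsUnique_path a b).unique hQ (Ra.reverse.append Rb).bypass_isPath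
  have hw : w ∈ (Ra.reverse.append Rb).support :=
    Walk.support_bypass_subset_support _
      (hQR ▸ Walk.support_subset_support_append_left _ _ Qa.end_mem_support)
  rw [Walk.mem_support_append_iff, Walk.support_reverse, List.mem_reverse] at hw
  exact hw.imp (Walk.dist_eq_add_of_mem_support hRa) (Walk.dist_eq_add_of_mem_support hRb)

lemma IsTree.parent_mem_subtree (hT : G.IsTree) (huw : u ≠ w)
    (hd : G.dist v w = G.dist v u + G.dist u w) :
    w ≠ v ∧ G.dist v (G.parent v w) = G.dist v u + G.dist u (G.parent v w) ∧
      G.dist u (G.parent v w) + 1 = G.dist u w := by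
  have hc := hT.connected
  have hwv : w ≠ v := by
    rintro rfl
    have := hc.pos_dist_of_ne huw
    rw [dist_self] at hd
    omega
  obtain ⟨y, hy, hyd⟩ := hc.exists_adj_dist_add_one_eq huw.symm
  have hyp : y = G.parent v w := by
    refine (hT.eq_parent_or_dist_eq_add_one_of_adj hy).resolve_right fun h => ?_
    have : G.dist v y ≤ G.dist v u + G.dist u y := hc.dist_triangle
    omega
  subst hyp
  have := (hc.adj_parent_and_dist hwv).2
  have : G.dist v (G.parent v w) ≤ G.dist v u + G.dist u (G.parent v w) := hc.dist_triangle
  exact ⟨hwv, by omega, hyd⟩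

end SimpleGraph

namespace Finset

lemma sum_erase_comp_sub_eq {α R : Type*} [DecidableEq α] [CommRing R] {s : Finset α}
    {r : α} (hr : r ∈ s) {π : α → α} (hπ : ∀ u ∈ s.erase r, π u ∈ s) (F : α → R) :
    ∑ u ∈ s.erase r, (F (π u) - F u) =
      ∑ w ∈ s, ((#{u ∈ s.erase r | π u = w} : R) - if w = r then 0 else 1) * F w := by
  have hfib : ∑ u ∈ s.erase r, F (π u) = ∑ w ∈ s, (#{u ∈ s.erase r | π u = w} : R) * F w := by
    rw [← sum_fiberwise_of_maps_to' hπ F]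
    simp only [sum_const, nsmul_eq_mul]
  have hself : ∑ u ∈ s.erase r, F u = ∑ w ∈ s, (if w = r then 0 else 1) * F w := by
    rw [← add_sum_erase s _ hr, if_pos rfl, zero_mul, zero_add]
    exact sum_congr rfl fun w hw => by rw [if_neg (ne_of_mem_erase hw), one_mul]
  simp only [sum_sub_distrib, hfib, hself, sub_mul]

end Finset

section

open Finset

lemma pow_mul_prod_le_pow_mul_prod {ι : Type*} {s s' : Finset ι} (hss' : s ⊆ s') {f : ι → ℝ}
    {r : ℝ} (hr0 : 0 ≤ r) (hr1 : r ≤ 1) (hf0 : ∀ i ∈ s', 0 ≤ f i) (hfr : ∀ i ∈ s' \ s, f i ≤ r)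
    {m n : ℕ} (hmn : m + #s ≤ n + #s') :
    r ^ n * ∏ i ∈ s', f i ≤ r ^ m * ∏ i ∈ s, f i := by
  have hs0 : 0 ≤ ∏ i ∈ s, f i := prod_nonneg fun i hi => hf0 i (hss' hi)
  have hdiff : ∏ i ∈ s' \ s, f i ≤ r ^ (#s' - #s) := by
    rw [← card_sdiff_of_subset hss', ← prod_const]
    exact prod_le_prod (fun i hi => hf0 i (sdiff_subset hi)) hfr
  have hcard := card_le_card hss'
  calc r ^ n * ∏ i ∈ s', f i = r ^ n * ((∏ i ∈ s' \ s, f i) * ∏ i ∈ s, f i) := by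
        rw [prod_sdiff hss']
    _ ≤ r ^ n * (r ^ (#s' - #s) * ∏ i ∈ s, f i) := by gcongr
    _ = r ^ (n + (#s' - #s)) * ∏ i ∈ s, f i := by ring
    _ ≤ r ^ m * ∏ i ∈ s, f i :=
        mul_le_mul_of_nonneg_right (pow_le_pow_of_le_one hr0 hr1 (by omega)) hs0

end

lemma mul_one_sub_le_one_sub {p q : ℝ} (hp : 0 < p) (hq : 2 - 1 / p ≤ q) :
    p * (1 - q) ≤ 1 - p := by
  have : p * (2 - 1 / p) ≤ p * q := mul_le_mul_of_nonneg_left hq hp.le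
  rw [mul_sub, mul_one_div_cancel hp.ne'] at this
  linarith

namespace SILimited

open SimpleGraph Finset

variable {V : Type*} {G : SimpleGraph V} {v u w : V} {t τ : ℕ} {X Y : V → ℕ → NodeState}
  {Ve : Set V} {p : ℝ} {q : V → ℝ}

lemma NodeState.isInfected_iff (s : NodeState) :
    s.IsInfected ↔ s = .infected ∨ s = .explicitN := by
  cases s <;> simp [NodeState.IsInfected]

lemma NodeState.not_isInfected_iff (s : NodeState) :
    ¬ s.IsInfected ↔ s = .susceptible ∨ s = .nonsusceptible := by
  cases s <;> simp [NodeState.IsInfected]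

namespace IsInfectionPath

variable (hX : IsInfectionPath G v t X)
include hX

lemma infected_mono {τ' : ℕ} (h : τ ≤ τ') (ht : τ' ≤ t) (hi : X u τ = .infected) :
    X u τ' = .infected := by
  induction τ', h using Nat.le_induction with
  | base => exact hi
  | succ n _ ih => exact hX.infected_stays u n (by omega) (ih (by omega))

lemma explicit_mono {τ' : ℕ} (h : τ ≤ τ') (ht : τ' ≤ t) (hi : X u τ = .explicitN) :
    X u τ' = .explicitN := by
  induction τ', h using Nat.le_induction with
  | base => exact hi
  | succ n _ ih => exact hX.explicit_stays u n (by omega) (ih (by omega))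

lemma isInfected_mono {τ' : ℕ} (h : τ ≤ τ') (ht : τ' ≤ t) (hi : (X u τ).IsInfected) :
    (X u τ').IsInfected := by
  rw [NodeState.isInfected_iff] at hi ⊢
  exact hi.imp (hX.infected_mono h ht) (hX.explicit_mono h ht)

lemma source_isInfected (hτ : τ ≤ t) : (X v τ).IsInfected :=
  hX.isInfected_mono (Nat.zero_le τ) hτ hX.source_infected

lemma exists_adj_isInfected_of_susceptible (hτ : τ ≤ t) (hs : X u τ = .susceptible) :
    ∃ w, G.Adj u w ∧ (X w τ).IsInfected :=
  (hX.susceptible_iff u τ hτ (by simp [hs, NodeState.IsInfected])).1 hs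

lemma susceptible_of_newly_infected (hτ : τ < t) (hn : ¬ (X u τ).IsInfected)
    (hi : (X u (τ + 1)).IsInfected) : X u τ = .susceptible :=
  (hX.infect_from_susceptible u τ hτ hi).resolve_left hn

lemma exists_adj_isInfected_of_newly_infected (hτ : τ < t) (hn : ¬ (X u τ).IsInfected)
    (hi : (X u (τ + 1)).IsInfected) : ∃ w, G.Adj u w ∧ (X w τ).IsInfected :=
  hX.exists_adj_isInfected_of_susceptible hτ.le (hX.susceptible_of_newly_infected hτ hn hi)

lemma dist_le_of_isInfected (hc : G.Connected) (hτ : τ ≤ t) (hi : (X u τ).IsInfected) :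
    G.dist v u ≤ τ := by
  induction τ generalizing u with
  | zero =>
    by_contra h
    exact hX.init_uninfected u (by rintro rfl; simp at h) hi
  | succ n ih =>
    by_cases h : (X u n).IsInfected
    · exact (ih (by omega) h).trans (Nat.le_succ n)
    · obtain ⟨w, hadj, hw⟩ := hX.exists_adj_isInfected_of_newly_infected (by omega) h hi
      have := ih (by omega) hw
      have : G.dist v u ≤ G.dist v w + G.dist w u := hc.dist_triangle
      rw [dist_eq_one_iff_adj.2 hadj.symm] at this
      omega

/-- A child cannot have infected `u`: it would itself have needed `u` infected one slot before. -/
lemma isInfected_parent (hT : G.IsTree) (hu : u ≠ v) (hτ : τ < t)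
    (hi : (X u (τ + 1)).IsInfected) : (X (G.parent v u) τ).IsInfected := by
  induction τ generalizing u with
  | zero =>
    obtain ⟨y, hadj, hy⟩ :=
      hX.exists_adj_isInfected_of_newly_infected hτ (hX.init_uninfected u hu) hi
    refine (hT.eq_parent_or_dist_eq_add_one_of_adj hadj).elim (· ▸ hy) fun hd => ?_
    exact absurd hy (hX.init_uninfected y (by rintro rfl; simp at hd))
  | succ n ih =>
    by_cases h : (X u (n + 1)).IsInfected
    · exact hX.isInfected_mono (Nat.le_succ n) hτ.le (ih hu (by omega) h)
    · obtain ⟨y, hadj, hy⟩ := hX.exists_adj_isInfected_of_newly_infected hτ h hi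
      refine (hT.eq_parent_or_dist_eq_add_one_of_adj hadj).elim (· ▸ hy) fun hd => ?_
      have hyv : y ≠ v := by rintro rfl; simp at hd
      have := ih hyv (by omega) hy
      rw [hT.parent_eq_of_dist_eq_add_one hadj hd] at this
      exact absurd (hX.isInfected_mono (Nat.le_succ n) hτ.le this) h

lemma isInfected_parent_of_isInfected (hT : G.IsTree) (hu : u ≠ v) (hτ : τ ≤ t)
    (hi : (X u τ).IsInfected) : (X (G.parent v u) τ).IsInfected := by
  cases τ with
  | zero => exact absurd hi (hX.init_uninfected u hu)
  | succ τ => exact hX.isInfected_mono (Nat.le_succ τ) hτ (hX.isInfected_parent hT hu hτ hi)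

lemma isInfected_parent_of_susceptible (hT : G.IsTree) (hτ : τ ≤ t)
    (hs : X u τ = .susceptible) : (X (G.parent v u) τ).IsInfected := by
  obtain ⟨y, hadj, hy⟩ := hX.exists_adj_isInfected_of_susceptible hτ hs
  refine (hT.eq_parent_or_dist_eq_add_one_of_adj hadj).elim (· ▸ hy) fun hd => ?_
  have hyv : y ≠ v := by rintro rfl; simp at hd
  have := hX.isInfected_parent_of_isInfected hT hyv hτ hy
  rw [hT.parent_eq_of_dist_eq_add_one hadj hd, hs] at this
  exact this.elim

lemma isInfected_of_mem_subtree (hT : G.IsTree) (hd : G.dist v w = G.dist v u + G.dist u w)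
    (hτ : τ + G.dist u w ≤ t) (hi : (X w (τ + G.dist u w)).IsInfected) :
    (X u τ).IsInfected := by
  induction hk : G.dist u w generalizing w with
  | zero =>
    obtain rfl := (hT.connected.dist_eq_zero_iff).1 hk
    simpa using hi
  | succ k ih =>
    have huw : u ≠ w := by rintro rfl; simp at hk
    obtain ⟨hwv, hd', hk'⟩ := hT.parent_mem_subtree huw hd
    rw [hk] at hτ hi hk'
    rw [show τ + (k + 1) = τ + G.dist u (G.parent v w) + 1 by omega] at hi
    exact ih hd' (by omega) (hX.isInfected_parent hT hwv (by omega) hi) (by omega)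

end IsInfectionPath

noncomputable def infectedSlots (t : ℕ) (X : V → ℕ → NodeState) (u : V) : ℕ :=
  #{τ ∈ range t | (X u τ).IsInfected}

noncomputable def susceptibleSlots (t : ℕ) (X : V → ℕ → NodeState) (u : V) : ℕ :=
  #{τ ∈ range t | X u τ = .susceptible}

noncomputable def stayingSusceptibleSlots (t : ℕ) (X : V → ℕ → NodeState) (u : V) : ℕ :=
  #{τ ∈ range t | X u τ = .susceptible ∧ X u (τ + 1) = .susceptible}

noncomputable def infectionSlots (t : ℕ) (X : V → ℕ → NodeState) (u : V) : ℕ :=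
  #{τ ∈ range t | ¬ (X u τ).IsInfected ∧ (X u (τ + 1)).IsInfected}

lemma firstInfection_le (h : (X u τ).IsInfected) : firstInfection X u ≤ τ := Nat.sInf_le h

lemma isInfected_firstInfection (h : (X u τ).IsInfected) :
    (X u (firstInfection X u)).IsInfected :=
  Nat.sInf_mem (s := {τ | (X u τ).IsInfected}) ⟨τ, h⟩

lemma not_isInfected_of_lt_firstInfection (h : τ < firstInfection X u) :
    ¬ (X u τ).IsInfected :=
  Nat.notMem_of_lt_sInf h

namespace IsInfectionPath

variable (hX : IsInfectionPath G v t X)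
include hX

lemma isInfected_iff_firstInfection_le (hi : (X u t).IsInfected) (hτ : τ ≤ t) :
    (X u τ).IsInfected ↔ firstInfection X u ≤ τ :=
  ⟨firstInfection_le, fun h => hX.isInfected_mono h hτ (isInfected_firstInfection hi)⟩

lemma infectedSlots_eq_sub_firstInfection (hi : (X u t).IsInfected) :
    infectedSlots t X u = t - firstInfection X u := by
  have : {τ ∈ range t | (X u τ).IsInfected} = Ico (firstInfection X u) t := by
    ext τ
    simp only [mem_filter, mem_range, mem_Ico]
    exact ⟨fun h => ⟨firstInfection_le h.2, h.1⟩,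
      fun h => ⟨h.2, (hX.isInfected_iff_firstInfection_le hi (by omega)).2 h.1⟩⟩
  rw [infectedSlots, this, Nat.card_Ico]

lemma infectedSlots_eq_zero (hn : ¬ (X u t).IsInfected) : infectedSlots t X u = 0 := by
  rw [infectedSlots, card_eq_zero, filter_eq_empty_iff]
  exact fun τ hτ h => hn (hX.isInfected_mono (by simp at hτ; omega) le_rfl h)

lemma dist_lt_of_infectedSlots_ne_zero (hc : G.Connected) (h : infectedSlots t X u ≠ 0) :
    G.dist v u < t := by
  obtain ⟨τ, hτ⟩ := card_ne_zero.1 h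
  rw [mem_filter, mem_range] at hτ
  exact (hX.dist_le_of_isInfected hc hτ.1.le hτ.2).trans_lt hτ.1

lemma infectedSlots_source : infectedSlots t X v = t := by
  rw [infectedSlots, filter_true_of_mem fun τ hτ => hX.source_isInfected (by simp at hτ; omega),
    card_range]

lemma susceptibleSlots_source : susceptibleSlots t X v = 0 := by
  rw [susceptibleSlots, card_eq_zero, filter_eq_empty_iff]
  intro τ hτ h
  have := hX.source_isInfected (τ := τ) (by simp at hτ; omega)
  simp [h, NodeState.IsInfected] at this

lemma infectionSlots_eq :
    infectionSlots t X u = if u ≠ v ∧ (X u t).IsInfected then 1 else 0 := by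
  split_ifs with h
  · obtain ⟨hu, hi⟩ := h
    have hpos : firstInfection X u ≠ 0 := fun h0 =>
      hX.init_uninfected u hu (h0 ▸ isInfected_firstInfection hi)
    have hle := firstInfection_le hi
    have : {τ ∈ range t | ¬ (X u τ).IsInfected ∧ (X u (τ + 1)).IsInfected} =
        {firstInfection X u - 1} := by
      ext τ
      simp only [mem_filter, mem_range, mem_singleton]
      constructor
      · rintro ⟨hτ, hn, hs⟩
        rw [hX.isInfected_iff_firstInfection_le hi hτ.le] at hn
        rw [hX.isInfected_iff_firstInfection_le hi hτ] at hs
        omega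
      · rintro rfl
        refine ⟨by omega, not_isInfected_of_lt_firstInfection (by omega), ?_⟩
        rw [Nat.sub_add_cancel (Nat.one_le_iff_ne_zero.2 hpos)]
        exact isInfected_firstInfection hi
    rw [infectionSlots, this, card_singleton]
  · rw [infectionSlots, card_eq_zero, filter_eq_empty_iff]
    rintro τ hτ ⟨hn, hs⟩
    rw [mem_range] at hτ
    by_cases hu : u = v
    · exact hn (hu ▸ hX.source_isInfected hτ.le)
    · exact h ⟨hu, hX.isInfected_mono (Nat.succ_le_of_lt hτ) le_rfl hs⟩

lemma susceptibleSlots_eq_add :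
    susceptibleSlots t X u = stayingSusceptibleSlots t X u + infectionSlots t X u := by
  have hsplit : ∀ τ ∈ range t, X u τ = .susceptible ↔
      (X u τ = .susceptible ∧ X u (τ + 1) = .susceptible) ∨
        (¬ (X u τ).IsInfected ∧ (X u (τ + 1)).IsInfected) := by
    intro τ hτ
    rw [mem_range] at hτ
    constructor
    · intro hs
      by_cases hi : (X u (τ + 1)).IsInfected
      · exact Or.inr ⟨by simp [hs, NodeState.IsInfected], hi⟩
      · obtain ⟨w, hadj, hw⟩ := hX.exists_adj_isInfected_of_susceptible hτ.le hs
        exact Or.inl ⟨hs, (hX.susceptible_iff u (τ + 1) hτ hi).2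
          ⟨w, hadj, hX.isInfected_mono (Nat.le_succ τ) hτ hw⟩⟩
    · rintro (⟨hs, -⟩ | ⟨hn, hi⟩)
      · exact hs
      · exact hX.susceptible_of_newly_infected hτ hn hi
  rw [susceptibleSlots, filter_congr hsplit, filter_or, card_union_of_disjoint]
  · rfl
  · rw [disjoint_filter]
    rintro τ - ⟨-, hs⟩ ⟨-, hi⟩
    simp [hs, NodeState.IsInfected] at hi

/-- A non-source node is susceptible exactly while its parent is infected and it is not. -/
lemma susceptibleSlots_eq_sub (hT : G.IsTree) (hu : u ≠ v) :
    (susceptibleSlots t X u : ℤ) = infectedSlots t X (G.parent v u) - infectedSlots t X u := by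
  have hsub : {τ ∈ range t | (X u τ).IsInfected} ⊆
      {τ ∈ range t | (X (G.parent v u) τ).IsInfected} :=
    monotone_filter_right _ fun τ hτ hi =>
      hX.isInfected_parent_of_isInfected hT hu (mem_range.1 hτ).le hi
  have hset : {τ ∈ range t | X u τ = .susceptible} =
      {τ ∈ range t | (X (G.parent v u) τ).IsInfected} \ {τ ∈ range t | (X u τ).IsInfected} := by
    ext τ
    simp only [mem_filter, mem_range, mem_sdiff, not_and]
    exact ⟨fun ⟨hτ, hs⟩ => ⟨⟨hτ, hX.isInfected_parent_of_susceptible hT hτ.le hs⟩,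
        fun _ => by simp [hs, NodeState.IsInfected]⟩,
      fun ⟨⟨hτ, hp⟩, hn⟩ => ⟨hτ, (hX.susceptible_iff u τ hτ.le (hn hτ)).2
        ⟨G.parent v u, (hT.connected.adj_parent_and_dist hu).1, hp⟩⟩⟩
  rw [susceptibleSlots, hset, card_sdiff_of_subset hsub, Nat.cast_sub (card_le_card hsub)]
  rfl

end IsInfectionPath

noncomputable def explicitnessProb (q : V → ℝ) (Ve : Set V) (u : V) : ℝ :=
  if u ∈ Ve then q u else 1 - q u

lemma explicitnessProb_nonneg (hq0 : 0 ≤ q u) (hq1 : q u ≤ 1) : 0 ≤ explicitnessProb q Ve u := by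
  unfold explicitnessProb
  split_ifs <;> linarith

namespace IsInfectionPath

variable (hX : IsInfectionPath G v t X)
include hX

lemma transProb_eq (hcons : ConsistentWith Ve t X) (hτ : τ < t) :
    transProb p (q u) (X u τ) (X u (τ + 1)) =
      (if X u τ = .susceptible ∧ X u (τ + 1) = .susceptible then 1 - p else 1) *
        (if ¬ (X u τ).IsInfected ∧ (X u (τ + 1)).IsInfected then p * explicitnessProb q Ve u
          else 1) := by
  cases h : X u τ with
  | susceptible =>
    by_cases hi : (X u (τ + 1)).IsInfected
    · rcases (NodeState.isInfected_iff _).1 hi with h' | h'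
      · have hu : u ∉ Ve := fun hu => by
          have hexp := (hcons u).2 hu
          rw [hX.infected_mono (Nat.succ_le_of_lt hτ) le_rfl h'] at hexp
          cases hexp
        simp [h', transProb, NodeState.IsInfected, explicitnessProb, hu]
      · have hu : u ∈ Ve := (hcons u).1 (hX.explicit_mono (Nat.succ_le_of_lt hτ) le_rfl h')
        simp [h', transProb, NodeState.IsInfected, explicitnessProb, hu]
    · obtain ⟨w, hadj, hw⟩ := hX.exists_adj_isInfected_of_susceptible hτ.le h
      have hs := (hX.susceptible_iff u (τ + 1) hτ hi).2
        ⟨w, hadj, hX.isInfected_mono (Nat.le_succ τ) hτ hw⟩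
      simp [hs, transProb]
  | nonsusceptible =>
    have hn : ¬ (X u (τ + 1)).IsInfected := fun hi => by
      simpa [h, NodeState.IsInfected] using hX.infect_from_susceptible u τ hτ hi
    rcases (NodeState.not_isInfected_iff _).1 hn with h' | h' <;>
      simp [h', transProb, NodeState.IsInfected]
  | infected => simp [hX.infected_stays u τ hτ h, transProb, NodeState.IsInfected]
  | explicitN => simp [hX.explicit_stays u τ hτ h, transProb, NodeState.IsInfected]

lemma prod_transProb_eq (hcons : ConsistentWith Ve t X) (u : V) :
    ∏ τ ∈ range t, transProb p (q u) (X u τ) (X u (τ + 1)) =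
      (1 - p) ^ stayingSusceptibleSlots t X u *
        (p * explicitnessProb q Ve u) ^ infectionSlots t X u := by
  rw [prod_congr rfl fun τ hτ => hX.transProb_eq hcons (mem_range.1 hτ), prod_mul_distrib]
  simp only [prod_ite, prod_const, one_pow, mul_one]
  rfl

lemma eq_nonsusceptible_of_lt_dist (hc : G.Connected) (hd : t + 1 < G.dist v u) (hτ : τ ≤ t) :
    X u τ = .nonsusceptible := by
  have hn : ¬ (X u τ).IsInfected := fun hi => by
    have := hX.dist_le_of_isInfected hc hτ hi
    omega
  refine ((NodeState.not_isInfected_iff _).1 hn).resolve_left fun hs => ?_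
  obtain ⟨w, hadj, hw⟩ := hX.exists_adj_isInfected_of_susceptible hτ hs
  have := hX.dist_le_of_isInfected hc hτ hw
  have : G.dist v u ≤ G.dist v w + G.dist w u := hc.dist_triangle
  rw [dist_eq_one_iff_adj.2 hadj.symm] at this
  omega

lemma source_explicit_iff (hcons : ConsistentWith Ve t X) : X v 0 = .explicitN ↔ v ∈ Ve := by
  rcases (NodeState.isInfected_iff _).1 hX.source_infected with h | h
  · have ht := hX.infected_mono (Nat.zero_le t) le_rfl h
    simp only [h, reduceCtorEq, false_iff]
    exact fun hv => by simp [(hcons v).2 hv] at ht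
  · exact ⟨fun _ => (hcons v).1 (hX.explicit_mono (Nat.zero_le t) le_rfl h), fun _ => h⟩

/-- Nodes farther than `t + 1` from the source stay non-susceptible and contribute factor `1`. -/
lemma pathProb_eq (hc : G.Connected) (hcons : ConsistentWith Ve t X) {B : Finset V}
    (hB : ∀ u, G.dist v u ≤ t + 1 → u ∈ B) :
    pathProb p q v t X = explicitnessProb q Ve v *
      ((1 - p) ^ (∑ u ∈ B, stayingSusceptibleSlots t X u) *
        ∏ u ∈ B with u ≠ v ∧ (X u t).IsInfected, p * explicitnessProb q Ve u) := by
  have hsupp : Function.mulSupport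
      (fun u => ∏ τ ∈ range t, transProb p (q u) (X u τ) (X u (τ + 1))) ⊆ B := by
    intro u hu
    by_contra hnB
    refine hu (prod_eq_one fun τ hτ => ?_)
    have hd : t + 1 < G.dist v u := by by_contra h; exact hnB (hB u (by omega))
    rw [mem_range] at hτ
    rw [hX.eq_nonsusceptible_of_lt_dist hc hd hτ.le, hX.eq_nonsusceptible_of_lt_dist hc hd hτ]
    rfl
  rw [pathProb, finprod_eq_prod_of_mulSupport_subset _ hsupp,
    prod_congr rfl fun u _ => hX.prod_transProb_eq hcons u, prod_mul_distrib,
    prod_pow_eq_pow_sum, prod_filter]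
  simp only [hX.infectionSlots_eq, pow_ite, pow_one, pow_zero, explicitnessProb,
    hX.source_explicit_iff hcons]

end IsInfectionPath

lemma ConsistentWith.isInfected_of_mem (hcons : ConsistentWith Ve t X) (hu : u ∈ Ve) :
    (X u t).IsInfected := by
  simp [(hcons u).2 hu, NodeState.IsInfected]

lemma ConsistentWith.notMem_of_not_isInfected (hcons : ConsistentWith Ve t X)
    (hu : ¬ (X u t).IsInfected) : u ∉ Ve :=
  fun h => hu (hcons.isInfected_of_mem h)

lemma eq_or_exists_geodesic_of_mem_spanVerts (hT : G.IsTree)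
    (hw : w ∈ spanVerts G (Ve ∪ {v})) :
    w = v ∨ ∃ e ∈ Ve, G.dist v e = G.dist v w + G.dist w e := by
  obtain ⟨a, ha, b, hb, hab⟩ := hw
  have eq_source {c : V} (hc : c ∈ ({v} : Set V)) (h : G.dist v c = G.dist v w + G.dist w c) :
      w = v := by
    rw [Set.mem_singleton_iff.1 hc, dist_self] at h
    exact ((hT.connected.dist_eq_zero_iff).1 (by omega)).symm
  rcases hT.dist_eq_add_or_dist_eq_add (v := v) hab with h | h
  · exact ha.elim (fun ha => Or.inr ⟨a, ha, h⟩) fun ha => Or.inl (eq_source ha h)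
  · exact hb.elim (fun hb => Or.inr ⟨b, hb, h⟩) fun hb => Or.inl (eq_source hb h)

namespace IsInfectionPath

variable (hX : IsInfectionPath G v t X) (hcons : ConsistentWith Ve t X)
include hX hcons

lemma isInfected_of_mem_spanVerts (hT : G.IsTree) (hw : w ∈ spanVerts G (Ve ∪ {v})) :
    (X w t).IsInfected := by
  rcases eq_or_exists_geodesic_of_mem_spanVerts hT hw with rfl | ⟨e, he, hd⟩
  · exact hX.source_isInfected le_rfl
  · have hdt : G.dist v e ≤ t :=
      hX.dist_le_of_isInfected hT.connected le_rfl (hcons.isInfected_of_mem he)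
    have hi : (X w (t - G.dist w e)).IsInfected :=
      hX.isInfected_of_mem_subtree hT hd (by omega)
        (by rw [Nat.sub_add_cancel (by omega)]; exact hcons.isInfected_of_mem he)
    exact hX.isInfected_mono (Nat.sub_le _ _) le_rfl hi

/-- Every consistent path has infected, by time `t`, a node of `T_u(v;H)` at distance
`d̄(u, T_u(v;H))` from `u`, and hence `u` itself that many slots earlier. -/
lemma firstInfection_add_dbar_le (hT : G.IsTree) (hu : u ∈ spanVerts G (Ve ∪ {v})) :
    firstInfection X u + dbar G u (subtreeAway G u v ∩ spanVerts G (Ve ∪ {v})) ≤ t := by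
  set A := subtreeAway G u v ∩ spanVerts G (Ve ∪ {v})
  have hbdd : BddAbove (G.dist u '' A) := by
    refine ⟨G.dist u v + t, ?_⟩
    rintro _ ⟨w, ⟨-, hw⟩, rfl⟩
    have := hX.dist_le_of_isInfected hT.connected le_rfl
      (hX.isInfected_of_mem_spanVerts hcons hT hw)
    have : G.dist u w ≤ G.dist u v + G.dist v w := hT.connected.dist_triangle
    omega
  have huA : u ∈ A := ⟨by simp [subtreeAway], hu⟩
  obtain ⟨w, ⟨hd, hw⟩, hdw⟩ := Nat.sSup_mem (s := G.dist u '' A) ⟨_, u, huA, rfl⟩ hbdd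
  have hwt := hX.isInfected_of_mem_spanVerts hcons hT hw
  have hdt := hX.dist_le_of_isInfected hT.connected le_rfl hwt
  have hd : G.dist v w = G.dist v u + G.dist u w := hd
  have hi : (X u (t - G.dist u w)).IsInfected :=
    hX.isInfected_of_mem_subtree hT hd (by omega) (by rwa [Nat.sub_add_cancel (by omega)])
  have := firstInfection_le hi
  rw [dbar, ← hdw]
  omega

lemma dbar_le_infectedSlots (hT : G.IsTree) (hu : u ∈ spanVerts G (Ve ∪ {v})) :
    dbar G u (subtreeAway G u v ∩ spanVerts G (Ve ∪ {v})) ≤ infectedSlots t X u := by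
  have := hX.firstInfection_add_dbar_le hcons hT hu
  rw [hX.infectedSlots_eq_sub_firstInfection (hX.isInfected_of_mem_spanVerts hcons hT hu)]
  omega

end IsInfectionPath

/-- Every neighbour of `w` other than its parent is a child. -/
lemma one_le_card_children (hT : G.IsTree) (hdeg : 2 ≤ (G.neighborSet w).ncard) (hw : w ≠ v)
    {B : Finset V} (hB : ∀ x, G.dist v x = G.dist v w + 1 → x ∈ B) :
    1 ≤ #{u ∈ B.erase v | G.parent v u = w} := by
  obtain ⟨x, hx, hxp⟩ : (G.neighborSet w \ {G.parent v w}).Nonempty := by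
    rw [Set.nonempty_iff_ne_empty, Ne, Set.sdiff_eq_empty]
    intro h
    have := Set.ncard_le_ncard h (Set.finite_singleton _)
    rw [Set.ncard_singleton] at this
    omega
  have hdx := (hT.eq_parent_or_dist_eq_add_one_of_adj (v := v) hx).resolve_left hxp
  have hxv : x ≠ v := by rintro rfl; simp at hdx
  exact card_pos.2 ⟨x, mem_filter.2 ⟨mem_erase.2 ⟨hxv, hB x hdx⟩,
    hT.parent_eq_of_dist_eq_add_one hx hdx⟩⟩

namespace IsInfectionPath

variable (hX : IsInfectionPath G v t X)
include hX

lemma sum_susceptibleSlots_eq (hT : G.IsTree) {B : Finset V} (hvB : v ∈ B)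
    (hpar : ∀ u ∈ B.erase v, G.parent v u ∈ B) :
    ∑ u ∈ B, (susceptibleSlots t X u : ℤ) = ∑ w ∈ B,
      ((#{u ∈ B.erase v | G.parent v u = w} : ℤ) - if w = v then 0 else 1) *
        infectedSlots t X w := by
  rw [← add_sum_erase B _ hvB, hX.susceptibleSlots_source, Nat.cast_zero, zero_add,
    sum_congr rfl fun u hu => hX.susceptibleSlots_eq_sub hT (ne_of_mem_erase hu)]
  exact sum_erase_comp_sub_eq hvB hpar (fun w => (infectedSlots t X w : ℤ))

lemma sum_stayingSusceptibleSlots_add_card (B : Finset V) :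
    ∑ u ∈ B, stayingSusceptibleSlots t X u + #{u ∈ B | u ≠ v ∧ (X u t).IsInfected} =
      ∑ u ∈ B, susceptibleSlots t X u := by
  simp only [hX.susceptibleSlots_eq_add, sum_add_distrib, hX.infectionSlots_eq, sum_boole,
    Nat.cast_id]

end IsInfectionPath

namespace IsLatestPath

variable (hT : G.IsTree) (hXl : IsLatestPath G Ve v t X) (hY : Y ∈ pathsFor G Ve v t)
include hT hXl hY

lemma infectedSlots_le (w : V) : infectedSlots t X w ≤ infectedSlots t Y w := by
  obtain ⟨hX, hXcons, hout, hfirst⟩ := hXl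
  obtain ⟨hY, hYcons⟩ := hY
  by_cases hwv : w = v
  · rw [hwv, hX.infectedSlots_source, hY.infectedSlots_source]
  by_cases hwt : (X w t).IsInfected
  · have hw : w ∈ spanVerts G (Ve ∪ {v}) := by
      by_contra hw
      exact hout w hw t le_rfl hwt
    have hXw := hX.firstInfection_add_dbar_le hXcons hT hw
    have hYw := hY.dbar_le_infectedSlots hYcons hT hw
    rw [hfirst w hw hwv] at hXw
    rw [hX.infectedSlots_eq_sub_firstInfection hwt, hfirst w hw hwv]
    omega
  · rw [hX.infectedSlots_eq_zero hwt]
    exact Nat.zero_le _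

lemma isInfected_of_isInfected (hw : (X w t).IsInfected) : (Y w t).IsInfected := by
  refine hY.1.isInfected_of_mem_spanVerts hY.2 hT ?_
  by_contra hspan
  exact hXl.2.2.1 w hspan t le_rfl hw

/-- The weights of the summation by parts are nonnegative wherever `Y` has infected slots,
and there the latest path has no more infected slots than `Y`. -/
lemma sum_susceptibleSlots_le (hdeg : ∀ u, 2 ≤ (G.neighborSet u).ncard) {B : Finset V}
    (hB : ∀ u, u ∈ B ↔ G.dist v u ≤ t + 1) :
    ∑ u ∈ B, susceptibleSlots t X u ≤ ∑ u ∈ B, susceptibleSlots t Y u := by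
  have hvB : v ∈ B := (hB v).2 (by simp)
  have hpar : ∀ u ∈ B.erase v, G.parent v u ∈ B := fun u hu => by
    have := (hT.connected.adj_parent_and_dist (ne_of_mem_erase hu)).2
    have := (hB u).1 (mem_of_mem_erase hu)
    exact (hB _).2 (by omega)
  rw [← Nat.cast_le (α := ℤ), Nat.cast_sum, Nat.cast_sum, hXl.1.sum_susceptibleSlots_eq hT hvB hpar,
    hY.1.sum_susceptibleSlots_eq hT hvB hpar]
  refine sum_le_sum fun w _ => ?_
  have hle := hXl.infectedSlots_le hT hY w
  by_cases hYw : infectedSlots t Y w = 0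
  · simp [hYw, Nat.le_zero.1 (hYw ▸ hle)]
  refine mul_le_mul_of_nonneg_left (Nat.cast_le.2 hle) ?_
  by_cases hwv : w = v
  · simp [hwv]
  have hdw := hY.1.dist_lt_of_infectedSlots_ne_zero hT.connected hYw
  have := one_le_card_children hT (hdeg w) hwv (B := B) fun x hx => (hB x).2 (by omega)
  rw [if_neg hwv, sub_nonneg]
  exact_mod_cast this

end IsLatestPath

end SILimited

open SILimited

theorem latest_path_is_most_likely_general
    {V : Type*} (G : SimpleGraph V) (hT : G.IsTree)
    (hloc : ∀ u : V, (G.neighborSet u).Finite)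
    (hdeg : ∀ u : V, 2 ≤ (G.neighborSet u).ncard)
    (p : ℝ) (hp0 : 0 < p) (hp1 : p < 1)
    (q : V → ℝ) (hq0 : ∀ u, max 0 (2 - 1 / p) ≤ q u) (hq1 : ∀ u, q u ≤ 1)
    (Ve : Set V)
    (v : V) (t : ℕ) :
    ∀ X, IsLatestPath G Ve v t X → IsMostLikely G p q Ve v t X := by
  intro X hXl
  refine ⟨⟨hXl.1, hXl.2.1⟩, fun Y hY => ?_⟩
  obtain ⟨B, hB⟩ : ∃ B : Finset V, ∀ u, u ∈ B ↔ G.dist v u ≤ t + 1 :=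
    ⟨_, fun u => (hT.connected.finite_setOf_dist_le hloc v (t + 1)).mem_toFinset⟩
  have hball : ∀ u, G.dist v u ≤ t + 1 → u ∈ B := fun u => (hB u).2
  have hq : ∀ u, 0 ≤ explicitnessProb q Ve u :=
    fun u => explicitnessProb_nonneg (le_of_max_le_left (hq0 u)) (hq1 u)
  rw [hXl.1.pathProb_eq hT.connected hXl.2.1 hball, hY.1.pathProb_eq hT.connected hY.2 hball]
  refine mul_le_mul_of_nonneg_left (pow_mul_prod_le_pow_mul_prod ?_ (by linarith) (by linarith)
    (fun u _ => mul_nonneg hp0.le (hq u)) (fun u hu => ?_) ?_) (hq v)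
  · exact Finset.monotone_filter_right _ fun u _ ⟨huv, hu⟩ =>
      ⟨huv, hXl.isInfected_of_isInfected hT hY hu⟩
  · simp only [Finset.mem_sdiff, Finset.mem_filter] at hu
    have hu : u ∉ Ve := hXl.2.1.notMem_of_not_isInfected fun h => hu.2 ⟨hu.1.1, hu.1.2.1, h⟩
    simpa [explicitnessProb, hu] using mul_one_sub_le_one_sub hp0 (le_of_max_le_right (hq0 u))
  · rw [hXl.1.sum_stayingSusceptibleSlots_add_card, hY.1.sum_stayingSusceptibleSlots_add_card]
    exact hXl.sum_susceptibleSlots_le hT hY hdeg hB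

/-- If `G` is a tree, then for any node `v` and any feasible elapsed time
`t ∈ 𝒯_v`, the latest infection path for `(v,t)` is a most likely infection path for `(v,t)`,
i.e., it maximizes `P_v` over all infection paths consistent with `Ve` at elapsed time `t`. -/
theorem latest_path_is_most_likely
    {V : Type*} [Infinite V] (G : SimpleGraph V) (hT : G.IsTree)
    (hloc : ∀ u : V, (G.neighborSet u).Finite)
    (hdeg : ∀ u : V, 2 ≤ (G.neighborSet u).ncard)
    (p : ℝ) (hp0 : 0 < p) (hp1 : p < 1)
    (q : V → ℝ) (hq0 : ∀ u, max 0 (2 - 1 / p) ≤ q u) (hq1 : ∀ u, q u ≤ 1)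
    (Ve : Set V) (hVene : Ve.Nonempty) (hVefin : Ve.Finite)
    (v : V) (t : ℕ) (ht : t ∈ feasibleTimes G Ve v) :
    ∀ X, IsLatestPath G Ve v t X → IsMostLikely G p q Ve v t X :=
  latest_path_is_most_likely_general G hT hloc hdeg p hp0 hp1 q hq0 hq1 Ve v t
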